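/- arXiv:0801.0949 — 4 statements merged into one kernel-verified Lean document; each statement's English description precedes it below -/
import Mathlib

section
/- Let A be an automaton and let φ be a robust live execution property for A such that no state occurs infinitely often along any execution in φ. Let γ, α ∈ execs^ω(A) with γ ∈ φ and α ∉ φ. Then there exists a set G ⊆ states(A) such that γ contains infinitely many states in G and no state of α is in G (i.e., γ ⊨ □◇G and α ⊨ □¬G). -/
/- Background formalization: automata, executions, traces, complemented-pairs
   liveness conditions, liveness-preserving simulation relations, etc. -/

open Classical

section AutomatonDefs

/-- An automaton over a type `S` of states and a type `Act` of actions. -/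
structure Automaton (S : Type*) (Act : Type*) where
  start : Set S
  start_nonempty : start.Nonempty
  ext : Set Act
  internal : Set Act
  ext_int_disjoint : Disjoint ext internal
  steps : Set (S × Act × S)
  steps_valid : ∀ t ∈ steps, t.2.1 ∈ ext ∪ internal

variable {S SA SB Act : Type*}

/-- A finite execution fragment `s₀ a₁ s₁ ⋯ a_len s_len`; only the values
`st i` for `i ≤ len` and `act i` for `i < len` are relevant
(`act i` is the action between `st i` and `st (i+1)`). -/
structure FinFrag (S : Type*) (Act : Type*) where
  len : ℕ
  st : ℕ → S
  act : ℕ → Act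

def FinFrag.IsFragOf (f : FinFrag S Act) (A : Automaton S Act) : Prop :=
  ∀ i < f.len, (f.st i, f.act i, f.st (i + 1)) ∈ A.steps

def FinFrag.IsExecOf (f : FinFrag S Act) (A : Automaton S Act) : Prop :=
  f.IsFragOf A ∧ f.st 0 ∈ A.start

def FinFrag.fstate (f : FinFrag S Act) : S := f.st 0

def FinFrag.lstate (f : FinFrag S Act) : S := f.st f.len

/-- A finite execution fragment meets a set `X` of states iff some state along
it lies in `X`. -/
def FinFrag.Meets (f : FinFrag S Act) (X : Set S) : Prop := ∃ i ≤ f.len, f.st i ∈ X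

def FinFrag.Prefix (f g : FinFrag S Act) : Prop :=
  f.len ≤ g.len ∧ (∀ i ≤ f.len, f.st i = g.st i) ∧ ∀ i < f.len, f.act i = g.act i

def FinFrag.StrictPrefix (f g : FinFrag S Act) : Prop :=
  f.Prefix g ∧ f.len < g.len

/-- Equality of finite fragments (up to irrelevant values). -/
def FinFrag.Equiv (f g : FinFrag S Act) : Prop :=
  f.len = g.len ∧ (∀ i ≤ f.len, f.st i = g.st i) ∧ ∀ i < f.len, f.act i = g.act i

/-- The trace of a finite list of actions: the sublist of external actions. -/
noncomputable def ltrace (ext : Set Act) (l : List Act) : List Act :=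
  l.filter fun a => decide (a ∈ ext)

/-- The trace of a finite execution fragment. -/
noncomputable def FinFrag.trace (f : FinFrag S Act) (ext : Set Act) : List Act :=
  ltrace ext ((List.range f.len).map f.act)

/-- trace(a) = a if a is external, the empty sequence otherwise. -/
noncomputable def atrace (ext : Set Act) (a : Act) : List Act :=
  if a ∈ ext then [a] else []

/-- The trace of the segment of actions `b_{j+1} ⋯ b_k` (0-indexed:
`act j, …, act (k-1)`) of an execution with actions `act`. -/
noncomputable def segTrace (ext : Set Act) (act : ℕ → Act) (j k : ℕ) : List Act :=
  ltrace ext ((List.range (k - j)).map fun t => act (j + t))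

/-- An infinite execution `s₀ a₁ s₁ a₂ s₂ ⋯` (with `act i` the action between
`st i` and `st (i+1)`). -/
structure InfExec (S : Type*) (Act : Type*) where
  st : ℕ → S
  act : ℕ → Act

def InfExec.IsExecOf (e : InfExec S Act) (A : Automaton S Act) : Prop :=
  e.st 0 ∈ A.start ∧ ∀ i, (e.st i, e.act i, e.st (i + 1)) ∈ A.steps

/-- The prefix `α|_n` of an infinite execution. -/
def InfExec.take (e : InfExec S Act) (n : ℕ) : FinFrag S Act := ⟨n, e.st, e.act⟩

/-- An infinite execution extends a finite one. -/
def InfExec.Extends (e : InfExec S Act) (f : FinFrag S Act) : Prop :=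
  (∀ i ≤ f.len, e.st i = f.st i) ∧ ∀ i < f.len, e.act i = f.act i

/-- `P n` holds for infinitely many `n`. -/
def InfOften (P : ℕ → Prop) : Prop := ∀ n, ∃ m, n ≤ m ∧ P m

/-- A complemented pair `⟨R, G⟩` of sets of states. -/
structure CPair (S : Type*) where
  R : Set S
  G : Set S

/-- `α ⊨ p`: if `α` contains infinitely many states in `p.R` then it contains
infinitely many states in `p.G`. -/
def InfExec.Sat (e : InfExec S Act) (p : CPair S) : Prop :=
  InfOften (fun n => e.st n ∈ p.R) → InfOften fun n => e.st n ∈ p.G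

/-- The live executions of `(A, L)`. -/
def lexecs (A : Automaton S Act) (L : Set (CPair S)) : Set (InfExec S Act) :=
  {e | e.IsExecOf A ∧ ∀ p ∈ L, e.Sat p}

/-- Machine closure: `(A, L)` is a live automaton (equivalently, `L` is a
complemented-pairs liveness condition over `A`). -/
def IsLivenessCondition (A : Automaton S Act) (L : Set (CPair S)) : Prop :=
  ∀ f : FinFrag S Act, f.IsExecOf A → ∃ e ∈ lexecs A L, e.Extends f

/-- The semantic closure of `L` in `A`. -/
def closL (A : Automaton S Act) (L : Set (CPair S)) : Set (CPair S) :=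
  {p | ∀ e ∈ lexecs A L, e.Sat p}

/-- A state is reachable iff it occurs in some execution. -/
def Reachable (A : Automaton S Act) (s : S) : Prop :=
  ∃ f : FinFrag S Act, f.IsExecOf A ∧ ∃ i ≤ f.len, f.st i = s

/-- An invariant is a superset of the reachable states. -/
def IsAutInvariant (A : Automaton S Act) (I : Set S) : Prop :=
  ∀ s, Reachable A s → s ∈ I

/-- `g[s]` for a relation `g ⊆ states(A) × states(B)`. -/
def gImg (g : Set (SA × SB)) (s : SA) : Set SB := {u | (s, u) ∈ g}

def ImageFinite (g : Set (SA × SB)) : Prop := ∀ s, (gImg g s).Finite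

/-- A transition `s →a s'` of `A` is always-silent (w.r.t. `g`, `I_A`, `I_B`). -/
def AlwaysSilent (A : Automaton SA Act) (B : Automaton SB Act)
    (IA : Set SA) (IB : Set SB) (g : Set (SA × SB)) (s : SA) (a : Act) (s' : SA) : Prop :=
  s ∈ IA ∧ ∀ β : FinFrag SB Act, β.IsFragOf B → β.fstate ∈ gImg g s ∩ IB →
    β.lstate ∈ gImg g s' → β.trace B.ext = atrace A.ext a → β.len = 0

/-- A transition `s →a s'` of `A` is sometimes-silent (w.r.t. `g`, `I_A`, `I_B`). -/
def SometimesSilent (A : Automaton SA Act) (B : Automaton SB Act)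
    (IA : Set SA) (IB : Set SB) (g : Set (SA × SB)) (s : SA) (a : Act) (s' : SA) : Prop :=
  s ∈ IA ∧ ∃ β : FinFrag SB Act, β.IsFragOf B ∧ β.fstate ∈ gImg g s ∩ IB ∧
    β.lstate ∈ gImg g s' ∧ β.trace B.ext = atrace A.ext a ∧ β.len = 0

/-- `(g, h)` is a liveness-preserving forward simulation from `(A, L)` to
`(B, M)` with respect to invariants `I_A`, `I_B`. -/
structure IsLPForwardSim (A : Automaton SA Act) (B : Automaton SB Act)
    (L : Set (CPair SA)) (M : Set (CPair SB)) (IA : Set SA) (IB : Set SB)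
    (g : Set (SA × SB)) (h : CPair SB → CPair SA) : Prop where
  h_total : ∀ q ∈ M, h q ∈ closL A L
  start_cond : ∀ s ∈ A.start, ∃ u ∈ B.start, (s, u) ∈ g
  step_cond : ∀ s a s', (s, a, s') ∈ A.steps → s ∈ IA → ∀ u ∈ gImg g s ∩ IB,
    ∃ β : FinFrag SB Act, β.IsFragOf B ∧ β.fstate = u ∧ β.lstate ∈ gImg g s' ∧
      β.trace B.ext = atrace A.ext a ∧
      ∀ q ∈ M, (β.Meets q.R → s ∈ (h q).R ∨ s' ∈ (h q).R) ∧
        ((s ∈ (h q).G ∨ s' ∈ (h q).G) → β.Meets q.G)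
  nonsilent : ∀ e ∈ lexecs A L,
    InfOften fun n => ¬ AlwaysSilent A B IA IB g (e.st n) (e.act n) (e.st (n + 1))

/-- `(g, h)` is a liveness-preserving backward simulation from `(A, L)` to
`(B, M)` with respect to invariants `I_A`, `I_B`. -/
structure IsLPBackwardSim (A : Automaton SA Act) (B : Automaton SB Act)
    (L : Set (CPair SA)) (M : Set (CPair SB)) (IA : Set SA) (IB : Set SB)
    (g : Set (SA × SB)) (h : CPair SB → CPair SA) : Prop where
  h_total : ∀ q ∈ M, h q ∈ closL A L
  nonempty_cond : ∀ s ∈ IA, (gImg g s ∩ IB).Nonempty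
  start_cond : ∀ s ∈ A.start, gImg g s ∩ IB ⊆ B.start
  step_cond : ∀ s a s', (s, a, s') ∈ A.steps → s ∈ IA → ∀ u' ∈ gImg g s' ∩ IB,
    ∃ β : FinFrag SB Act, β.IsFragOf B ∧ β.fstate ∈ gImg g s ∩ IB ∧ β.lstate = u' ∧
      β.trace B.ext = atrace A.ext a ∧
      ∀ q ∈ M, (β.Meets q.R → s ∈ (h q).R ∨ s' ∈ (h q).R) ∧
        ((s ∈ (h q).G ∨ s' ∈ (h q).G) → β.Meets q.G)
  nonsilent : ∀ e ∈ lexecs A L,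
    InfOften fun n => ¬ SometimesSilent A B IA IB g (e.st n) (e.act n) (e.st (n + 1))

/-- Live index mapping from a finite execution `α` of `A` to a finite
execution `β` of `B` with respect to `(R, H)`. -/
structure LiveIndexMapFF (A : Automaton SA Act) (B : Automaton SB Act)
    (R : Set (SA × SB)) (M : Set (CPair SB)) (H : CPair SB → CPair SA)
    (α : FinFrag SA Act) (β : FinFrag SB Act) (m : ℕ → ℕ) : Prop where
  zero : m 0 = 0
  mono : ∀ i j, i ≤ j → j ≤ α.len → m i ≤ m j
  bound : ∀ i ≤ α.len, m i ≤ β.len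
  rel : ∀ i ≤ α.len, (α.st i, β.st (m i)) ∈ R
  tr : ∀ i, 0 < i → i ≤ α.len →
    segTrace B.ext β.act (m (i - 1)) (m i) = atrace A.ext (α.act (i - 1))
  cofinal : ∀ j ≤ β.len, ∃ i ≤ α.len, j ≤ m i
  pairR : ∀ q ∈ M, ∀ i, 0 < i → i ≤ α.len →
    (∃ j, m (i - 1) ≤ j ∧ j ≤ m i ∧ β.st j ∈ q.R) →
      α.st (i - 1) ∈ (H q).R ∨ α.st i ∈ (H q).R
  pairG : ∀ q ∈ M, ∀ i, 0 < i → i ≤ α.len →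
    (α.st (i - 1) ∈ (H q).G ∨ α.st i ∈ (H q).G) →
      ∃ j, m (i - 1) ≤ j ∧ j ≤ m i ∧ β.st j ∈ q.G

/-- Live index mapping from an infinite execution `α` of `A` to an infinite
execution `β` of `B` with respect to `(R, H)`. -/
structure LiveIndexMapII (A : Automaton SA Act) (B : Automaton SB Act)
    (R : Set (SA × SB)) (M : Set (CPair SB)) (H : CPair SB → CPair SA)
    (α : InfExec SA Act) (β : InfExec SB Act) (m : ℕ → ℕ) : Prop where
  zero : m 0 = 0
  mono : Monotone m
  rel : ∀ i, (α.st i, β.st (m i)) ∈ R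
  tr : ∀ i, 0 < i →
    segTrace B.ext β.act (m (i - 1)) (m i) = atrace A.ext (α.act (i - 1))
  cofinal : ∀ j, ∃ i, j ≤ m i
  pairR : ∀ q ∈ M, ∀ i, 0 < i →
    (∃ j, m (i - 1) ≤ j ∧ j ≤ m i ∧ β.st j ∈ q.R) →
      α.st (i - 1) ∈ (H q).R ∨ α.st i ∈ (H q).R
  pairG : ∀ q ∈ M, ∀ i, 0 < i →
    (α.st (i - 1) ∈ (H q).G ∨ α.st i ∈ (H q).G) →
      ∃ j, m (i - 1) ≤ j ∧ j ≤ m i ∧ β.st j ∈ q.G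

/-- The trace of an infinite execution, as a partial sequence: position `n`
holds the `n`-th external action, if it exists. -/
noncomputable def itrace (ext : Set Act) (act : ℕ → Act) : ℕ → Option Act := fun n =>
  if h : ∃ i, act i ∈ ext ∧ {j | j < i ∧ act j ∈ ext}.ncard = n then some (act h.choose)
  else none

/-- The set of traces of a set of infinite executions. -/
noncomputable def tracesOf (ext : Set Act) (Φ : Set (InfExec S Act)) :
    Set (ℕ → Option Act) :=
  (fun e => itrace ext e.act) '' Φ

/-- `r ⪯ w` for a strict order `lt`. -/
def pLe (lt : CPair S → CPair S → Prop) (r w : CPair S) : Prop := lt r w ∨ r = w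

/-- The immediate successors of `r` in `(P, lt)`. -/
def succSet (P : Set (CPair S)) (lt : CPair S → CPair S → Prop) (r : CPair S) :
    Set (CPair S) :=
  {w | w ∈ P ∧ lt r w ∧ ∀ w' ∈ P, pLe lt r w' → lt w' w → r = w'}

/-- No state occurs infinitely often along any execution in `φ`. -/
def NoInfRep (φ : Set (InfExec S Act)) : Prop :=
  ∀ e ∈ φ, ∀ s : S, {n | e.st n = s}.Finite

/-- `γ ⊴ α`: some suffix of `γ` maps into `α` as in the robustness definition. -/
def Subsumes (γ α : InfExec S Act) : Prop :=
  ∃ k : ℕ, ∃ m : ℕ → ℕ, (∀ i, α.st (m i) = γ.st (k + i)) ∧ ∀ i, {j | m j = i}.Finite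

/-- A live execution property for `A`. -/
def IsLiveExecProperty (A : Automaton S Act) (φ : Set (InfExec S Act)) : Prop :=
  (∀ e ∈ φ, e.IsExecOf A) ∧
    ∀ f : FinFrag S Act, f.IsExecOf A → ∃ e ∈ φ, e.Extends f

/-- `φ` is robust for `A`. -/
def Robust (A : Automaton S Act) (φ : Set (InfExec S Act)) : Prop :=
  ∀ γ α : InfExec S Act, γ.IsExecOf A → α.IsExecOf A → Subsumes γ α → γ ∈ φ → α ∈ φ

/-- `A` is a forest automaton: each reachable state is the last state of
exactly one finite execution. -/
def IsForest (A : Automaton S Act) : Prop :=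
  ∀ f g : FinFrag S Act, f.IsExecOf A → g.IsExecOf A → f.lstate = g.lstate → f.Equiv g

/-- A (finite or infinite) execution, with length in `ℕ∞`. -/
structure ExecE (S : Type*) (Act : Type*) where
  len : ℕ∞
  st : ℕ → S
  act : ℕ → Act

def ExecE.IsExecOf (e : ExecE S Act) (A : Automaton S Act) : Prop :=
  e.st 0 ∈ A.start ∧ ∀ i : ℕ, (i : ℕ∞) < e.len → (e.st i, e.act i, e.st (i + 1)) ∈ A.steps

/-- Node of the digraph induced by `α`, `b = (g,h)`, `I_B`, `L`, `M`. -/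
def DNode (IB : Set SB) (g : Set (SA × SB)) (α : ExecE SA Act) (x : SB × ℕ) : Prop :=
  (x.2 : ℕ∞) ≤ α.len ∧ x.1 ∈ gImg g (α.st x.2) ∩ IB

/-- Edge of the digraph induced by `α`, `b = (g,h)`, `I_B`, `L`, `M`. -/
def DEdge (A : Automaton SA Act) (B : Automaton SB Act) (IB : Set SB)
    (g : Set (SA × SB)) (M : Set (CPair SB)) (h : CPair SB → CPair SA)
    (α : ExecE SA Act) (x y : SB × ℕ) : Prop :=
  DNode IB g α x ∧ DNode IB g α y ∧ y.2 = x.2 + 1 ∧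
  ∃ β : FinFrag SB Act, β.IsFragOf B ∧ β.fstate = x.1 ∧ β.lstate = y.1 ∧
    β.trace B.ext = atrace A.ext (α.act x.2) ∧
    ∀ q ∈ M, (β.Meets q.R → α.st x.2 ∈ (h q).R ∨ α.st (x.2 + 1) ∈ (h q).R) ∧
      ((α.st x.2 ∈ (h q).G ∨ α.st (x.2 + 1) ∈ (h q).G) → β.Meets q.G)

/-- Root of the induced digraph: a node with no incoming edge. -/
def DRoot (A : Automaton SA Act) (B : Automaton SB Act) (IB : Set SB)
    (g : Set (SA × SB)) (M : Set (CPair SB)) (h : CPair SB → CPair SA)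
    (α : ExecE SA Act) (x : SB × ℕ) : Prop :=
  DNode IB g α x ∧ ¬ ∃ y, DEdge A B IB g M h α y x

end AutomatonDefs

/-! Take `G` to be the set of states that `α` never visits. If `γ` eventually stayed among the
states of `α`, pick for each late position of `γ` a position of `α` with the same state. Since `γ`
visits each state only finitely often, this index map has finite fibres, so `γ ⊴ α`, and robustness
would put `α` in `φ`. -/

section Robustness

variable {S Act : Type*}

theorem subsumes_of_eventually_mem_range {γ α : InfExec S Act}
    (hfin : ∀ s, {n | γ.st n = s}.Finite) {k : ℕ}
    (hk : ∀ n, k ≤ n → γ.st n ∈ Set.range α.st) : Subsumes γ α := by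
  choose m hm using fun i => hk (k + i) (Nat.le_add_right k i)
  refine ⟨k, m, hm, fun i => ?_⟩
  have hsub : {j | m j = i} ⊆ (k + ·) ⁻¹' {n | γ.st n = α.st i} := by
    rintro j rfl
    exact (hm j).symm
  exact ((hfin (α.st i)).preimage (add_right_injective k).injOn).subset hsub

theorem Robust.infOften_not_mem_range {A : Automaton S Act} {φ : Set (InfExec S Act)}
    (hrob : Robust A φ) (hnorep : NoInfRep φ) {γ α : InfExec S Act}
    (hγe : γ.IsExecOf A) (hαe : α.IsExecOf A) (hγ : γ ∈ φ) (hα : α ∉ φ) :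
    InfOften fun n => γ.st n ∉ Set.range α.st := by
  by_contra h
  simp only [InfOften, not_forall, not_exists, not_and, not_not] at h
  obtain ⟨k, hk⟩ := h
  exact hα (hrob γ α hγe hαe (subsumes_of_eventually_mem_range (hnorep γ hγ) hk) hγ)

end Robustness

theorem stmt12_general {S Act : Type*} (A : Automaton S Act) (φ : Set (InfExec S Act))
    (hrob : Robust A φ) (hnorep : NoInfRep φ)
    (γ α : InfExec S Act) (hγe : γ.IsExecOf A) (hαe : α.IsExecOf A)
    (hγ : γ ∈ φ) (hα : α ∉ φ) :
    ∃ G : Set S, InfOften (fun n => γ.st n ∈ G) ∧ ∀ n, α.st n ∉ G :=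
  ⟨(Set.range α.st)ᶜ, hrob.infOften_not_mem_range hnorep hγe hαe hγ hα,
    fun n hn => hn ⟨n, rfl⟩⟩

/-- an execution in a robust live execution property `φ` (along
whose executions no state repeats infinitely often) can be distinguished from
an execution outside `φ` by a simple Büchi condition. -/
theorem stmt12 {S Act : Type*} (A : Automaton S Act) (φ : Set (InfExec S Act))
    (hφ : IsLiveExecProperty A φ) (hrob : Robust A φ) (hnorep : NoInfRep φ)
    (γ α : InfExec S Act) (hγe : γ.IsExecOf A) (hαe : α.IsExecOf A)
    (hγ : γ ∈ φ) (hα : α ∉ φ) :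
    ∃ G : Set S, InfOften (fun n => γ.st n ∈ G) ∧ ∀ n, α.st n ∉ G :=
  stmt12_general A φ hrob hnorep γ α hγe hαe hγ hα
end

section
/- Relative Expressive Completeness of Generalized-Büchi: Let A be an automaton and let φ be an arbitrary robust live execution property for A such that no state occurs infinitely often along any execution in φ. Then there exists a family {G_i}_{i ∈ η} of subsets of states(A), for some index set η, such that φ = { γ ∈ execs^ω(A) : ∀ i ∈ η, γ contains infinitely many states in G_i }. -/
/- Background formalization: automata, executions, traces, complemented-pairs
   liveness conditions, liveness-preserving simulation relations, etc. -/

open Classical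

/-!
Take for the generalized-Büchi family all sets of states that every execution in `φ` visits
infinitely often. Conversely, let `α` be an execution visiting each of these sets infinitely
often. The states outside `α` form a set that `α` never visits, so some `γ ∈ φ` eventually
stays among the states of `α`. Mapping each state of that suffix of `γ` to an occurrence in `α`
has finite fibres because `γ` repeats no state infinitely often, so `γ ⊴ α`, and robustness
gives `α ∈ φ`.
-/

namespace InfExec

variable {S Act : Type*}

theorem not_infOften_compl_range (e : InfExec S Act) :
    ¬ InfOften fun n => e.st n ∈ (Set.range e.st)ᶜ := by
  intro h
  obtain ⟨n, -, hn⟩ := h 0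
  exact hn ⟨n, rfl⟩

theorem subsumes_of_eventually_mem_range {γ α : InfExec S Act}
    (hfin : ∀ s, {n | γ.st n = s}.Finite) {N : ℕ} (hN : ∀ n, N ≤ n → γ.st n ∈ Set.range α.st) :
    Subsumes γ α := by
  choose m hm using fun i => hN (N + i) (Nat.le_add_right N i)
  refine ⟨N, m, hm, fun i => ?_⟩
  refine ((hfin (α.st i)).preimage (add_right_injective N).injOn).subset fun j hj => ?_
  change m j = i at hj
  change γ.st (N + j) = α.st i
  rw [← hm j, hj]

end InfExec

def buchiSets {S Act : Type*} (φ : Set (InfExec S Act)) : Set (Set S) :=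
  {G | ∀ e ∈ φ, InfOften fun n => e.st n ∈ G}

theorem mem_of_forall_buchiSets {S Act : Type*} {A : Automaton S Act} {φ : Set (InfExec S Act)}
    (hexec : ∀ e ∈ φ, e.IsExecOf A) (hrob : Robust A φ) (hnorep : NoInfRep φ)
    {α : InfExec S Act} (hα : α.IsExecOf A)
    (hG : ∀ G ∈ buchiSets φ, InfOften fun n => α.st n ∈ G) :
    α ∈ φ := by
  have hcompl : (Set.range α.st)ᶜ ∉ buchiSets φ := fun h => α.not_infOften_compl_range (hG _ h)
  obtain ⟨γ, hγ, hγfin⟩ : ∃ γ ∈ φ, ¬ InfOften fun n => γ.st n ∈ (Set.range α.st)ᶜ := by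
    simpa [buchiSets] using hcompl
  obtain ⟨N, hN⟩ : ∃ N, ∀ n, N ≤ n → γ.st n ∈ Set.range α.st := by
    simpa [InfOften] using hγfin
  exact hrob γ α (hexec γ hγ) hα (InfExec.subsumes_of_eventually_mem_range (hnorep γ hγ) hN) hγ

/-- Relative Expressive Completeness of Generalized-Büchi. -/
theorem stmt14 {S Act : Type*} (A : Automaton S Act) (φ : Set (InfExec S Act))
    (hφ : IsLiveExecProperty A φ) (hrob : Robust A φ) (hnorep : NoInfRep φ) :
    ∃ Gs : Set (Set S),
      φ = {e : InfExec S Act | e.IsExecOf A ∧ ∀ G ∈ Gs, InfOften fun n => e.st n ∈ G} := by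
  refine ⟨buchiSets φ, Set.ext fun α => ⟨fun hα => ⟨hφ.1 α hα, fun G hG => hG α hα⟩, ?_⟩⟩
  rintro ⟨hα, hG⟩
  exact mem_of_forall_buchiSets hφ.1 hrob hnorep hα hG
end

section
/- Relative Expressive Completeness of Complemented-pairs: Let A be an automaton and let ψ be an arbitrary robust live trace property for A, where additionally no state occurs infinitely often along any execution in the underlying robust live execution property. Then there exists a complemented-pairs liveness condition L over A such that traces(lexecs(A, L)) = ψ. -/
/- Background formalization: automata, executions, traces, complemented-pairs
   liveness conditions, liveness-preserving simulation relations, etc. -/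

open Classical

/-! The liveness condition is the set of all complemented pairs satisfied by every execution
of `φ`; it is machine closed because `φ` is live, and its live executions contain `φ`.
Conversely, every execution `α` violates the pair `⟨univ, (range α)ᶜ⟩`, so if `α` is live
this pair is not satisfied by all of `φ`: some `e ∈ φ` eventually stays inside the states
of `α`. Since no state repeats infinitely often along `e`, mapping each later position of `e`
to a position of `α` with the same state has finite fibres, i.e. `e ⊴ α`, and robustness
puts `α` in `φ`. Hence `lexecs A L = φ`. -/

open Set

section SatPairs

variable {S Act : Type*}

def satPairs (φ : Set (InfExec S Act)) : Set (CPair S) :=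
  {p | ∀ e ∈ φ, e.Sat p}

lemma subset_lexecs_satPairs {A : Automaton S Act} {φ : Set (InfExec S Act)}
    (hφ : ∀ e ∈ φ, e.IsExecOf A) : φ ⊆ lexecs A (satPairs φ) :=
  fun e he => ⟨hφ e he, fun _ hp => hp e he⟩

lemma isLivenessCondition_satPairs {A : Automaton S Act} {φ : Set (InfExec S Act)}
    (hφ : IsLiveExecProperty A φ) : IsLivenessCondition A (satPairs φ) := by
  intro f hf
  obtain ⟨e, he, hext⟩ := hφ.2 f hf
  exact ⟨e, subset_lexecs_satPairs hφ.1 he, hext⟩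

lemma InfExec.not_sat_univ_compl_range (α : InfExec S Act) :
    ¬ α.Sat ⟨univ, (range α.st)ᶜ⟩ := by
  intro hsat
  obtain ⟨n, -, hn⟩ := hsat (fun n => ⟨n, le_rfl, mem_univ _⟩) 0
  exact hn ⟨n, rfl⟩

lemma InfExec.sat_univ_compl_of_frequently_not_mem {e : InfExec S Act} {X : Set S}
    (h : ∀ k, ∃ i, e.st (k + i) ∉ X) : e.Sat ⟨univ, Xᶜ⟩ := by
  intro _ k
  obtain ⟨i, hi⟩ := h k
  exact ⟨k + i, Nat.le_add_right k i, hi⟩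

lemma exists_tail_subset_range_of_mem_lexecs_satPairs {A : Automaton S Act}
    {φ : Set (InfExec S Act)} {α : InfExec S Act} (hα : α ∈ lexecs A (satPairs φ)) :
    ∃ e ∈ φ, ∃ k, ∀ i, e.st (k + i) ∈ range α.st := by
  by_contra! h
  exact α.not_sat_univ_compl_range
    (hα.2 _ fun e he => InfExec.sat_univ_compl_of_frequently_not_mem (h e he))

lemma subsumes_of_tail_subset_range {γ α : InfExec S Act}
    (hγ : ∀ s, {n | γ.st n = s}.Finite) {k : ℕ} (htail : ∀ i, γ.st (k + i) ∈ range α.st) :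
    Subsumes γ α := by
  choose m hm using htail
  refine ⟨k, m, hm, fun j => ?_⟩
  have hfib : {i | m i = j} ⊆ (k + ·) ⁻¹' {n | γ.st n = α.st j} := by
    rintro i rfl
    exact (hm i).symm
  exact ((hγ (α.st j)).preimage (add_right_injective k).injOn).subset hfib

lemma lexecs_satPairs_eq {A : Automaton S Act} {φ : Set (InfExec S Act)}
    (hφ : IsLiveExecProperty A φ) (hrob : Robust A φ) (hrep : NoInfRep φ) :
    lexecs A (satPairs φ) = φ := by
  refine Subset.antisymm ?_ (subset_lexecs_satPairs hφ.1)
  intro α hα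
  obtain ⟨e, he, k, htail⟩ := exists_tail_subset_range_of_mem_lexecs_satPairs hα
  exact hrob e α (hφ.1 e he) hα.1 (subsumes_of_tail_subset_range (hrep e he) htail) he

end SatPairs

/-- Relative Expressive Completeness of Complemented-pairs
(trace version). -/
theorem stmt15 {S Act : Type*} (A : Automaton S Act) (ψ : Set (ℕ → Option Act))
    (hψ : ∃ φ : Set (InfExec S Act),
      IsLiveExecProperty A φ ∧ Robust A φ ∧ NoInfRep φ ∧ ψ = tracesOf A.ext φ) :
    ∃ L : Set (CPair S), IsLivenessCondition A L ∧ tracesOf A.ext (lexecs A L) = ψ := by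
  obtain ⟨φ, hφ, hrob, hrep, rfl⟩ := hψ
  exact ⟨satPairs φ, isLivenessCondition_satPairs hφ, by rw [lexecs_satPairs_eq hφ hrob hrep]⟩
end

section
/- Let A be a forest automaton. Then for all α, α' ∈ execs^ω(A): α' ≠ α if and only if α' ⊨ pair(α), where pair(α) = ⟨states(α), ∅⟩. -/
/- Background formalization: automata, executions, traces, complemented-pairs
   liveness conditions, liveness-preserving simulation relations, etc. -/

open Classical

section ForestExecutions

variable {S Act : Type*} {A : Automaton S Act}

theorem InfExec.IsExecOf.take {α : InfExec S Act} (hα : α.IsExecOf A) (n : ℕ) :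
    (α.take n).IsExecOf A :=
  ⟨fun i _ => hα.2 i, hα.1⟩

theorem IsForest.agree_of_st_eq (hA : IsForest A) {α α' : InfExec S Act}
    (hα : α.IsExecOf A) (hα' : α'.IsExecOf A) {n k : ℕ} (h : α'.st n = α.st k) :
    (∀ i ≤ n, α'.st i = α.st i) ∧ ∀ i < n, α'.act i = α.act i :=
  let ⟨_, hst, hact⟩ := hA _ _ (hα'.take n) (hα.take k) h
  ⟨hst, hact⟩

theorem IsForest.eq_of_infOften_mem_range (hA : IsForest A) {α α' : InfExec S Act}
    (hα : α.IsExecOf A) (hα' : α'.IsExecOf A)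
    (hinf : InfOften fun n => α'.st n ∈ Set.range α.st) : α' = α := by
  have agree : ∀ i, α'.st i = α.st i ∧ α'.act i = α.act i := by
    intro i
    -- a visit to a state of `α` after time `i` fixes the whole history of `α'` up to it
    obtain ⟨n, hin, k, hk⟩ := hinf (i + 1)
    obtain ⟨hst, hact⟩ := hA.agree_of_st_eq hα hα' hk.symm
    exact ⟨hst i (by omega), hact i (by omega)⟩
  cases α
  cases α'
  congr
  exacts [funext fun i => (agree i).1, funext fun i => (agree i).2]

theorem InfExec.not_sat_range_st (α : InfExec S Act) :
    ¬ α.Sat ⟨Set.range α.st, ∅⟩ := fun hsat =>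
  let ⟨_, _, hmem⟩ := hsat (fun n => ⟨n, le_rfl, n, rfl⟩) 0
  hmem

end ForestExecutions

/-- in a forest automaton, for infinite executions `α`, `α'`:
`α' ≠ α` iff `α' ⊨ pair(α)`, where `pair(α) = ⟨states(α), ∅⟩`. -/
theorem stmt16 {S Act : Type*} (A : Automaton S Act) (hA : IsForest A)
    (α α' : InfExec S Act) (hα : α.IsExecOf A) (hα' : α'.IsExecOf A) :
    α' ≠ α ↔ α'.Sat (CPair.mk (Set.range α.st) ∅) := by
  constructor
  · intro hne hinf
    exact absurd (hA.eq_of_infOften_mem_range hα hα' hinf) hne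
  · rintro hsat rfl
    exact α'.not_sat_range_st hsat
end
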